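/- arXiv:2006.04861 — 4 statements merged into one kernel-verified Lean document; each statement's English description precedes it below -/
import Mathlib

section
/- Let (a_p)_{p∈ℕ} be a sequence of positive real numbers. (i) There exists h > 0 such that sup_{p∈ℕ} a_p/h^p < ∞ if and only if for every r ∈ 𝔕 one has sup_{p∈ℕ} a_p/∏_{j=0}^p r_j < ∞. (ii) For every h > 0 one has sup_{p∈ℕ} h^p a_p < ∞ if and only if there exists r ∈ 𝔕 such that sup_{p∈ℕ} a_p ∏_{j=0}^p r_j < ∞. -/
/-!
For `r ∈ 𝔖` and `h > 0` the quotient `h ^ p / ∏_{j ≤ p} r j` is eventually decreasing, since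
`r j ≥ h` eventually; this gives the two easy implications. For the two others one builds `r` as
an integer step sequence: given thresholds `q 0 < q 1 < ⋯`, let `r j = k + 1` for
`q (k - 1) ≤ j < q k`. In (i), if `a p / h ^ p` is unbounded for every `h > 0`, choose `q k` just
beyond an index `p` with `a p > (k + 1) ^ (p + 2)`; then `a p / ∏_{j ≤ p} r j > k + 1`. In (ii),
choose `q k` beyond the point from which `a p (k + 2) ^ (p + 1) ≤ 1`; then
`a p ∏_{j ≤ p} r j ≤ a p (r p) ^ (p + 1) ≤ 1`.
-/

open Filter MeasureTheory
open scoped BigOperators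

noncomputable section

/-- The family 𝔖 of non-decreasing positive sequences with `r 0 = r 1 = 1` tending to `∞`. -/
def inFrakR (r : ℕ → ℝ) : Prop :=
  (∀ j, 0 < r j) ∧ Monotone r ∧ r 0 = 1 ∧ r 1 = 1 ∧ Tendsto r atTop atTop

open Finset

section Bounds

variable {ι β : Type*}

lemma exists_forall_le_of_eventually_le [Preorder β] [IsDirectedOrder β] {f : ℕ → β} {C : β}
    (h : ∀ᶠ p in atTop, f p ≤ C) : ∃ C', ∀ p, f p ≤ C' := by
  obtain ⟨C', hC'⟩ := (isBoundedUnder_of_eventually_le h).bddAbove_range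
  exact ⟨C', fun p => hC' ⟨p, rfl⟩⟩

lemma frequently_lt_of_not_exists_forall_le [LinearOrder β] {f : ℕ → β}
    (h : ¬∃ C, ∀ p, f p ≤ C) (C : β) : ∃ᶠ p in atTop, C < f p := by
  refine fun hC => h (exists_forall_le_of_eventually_le (C := C) ?_)
  simpa only [not_lt] using hC

lemma exists_forall_le_of_eventually_succ_le [Preorder β] [IsDirectedOrder β] {f : ℕ → β}
    (h : ∀ᶠ p in atTop, f (p + 1) ≤ f p) : ∃ C, ∀ p, f p ≤ C := by
  obtain ⟨N, hN⟩ := eventually_atTop.1 h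
  refine exists_forall_le_of_eventually_le (C := f N) (eventually_atTop.2 ⟨N, fun p hp => ?_⟩)
  induction p, hp using Nat.le_induction with
  | base => rfl
  | succ p hp ih => exact (hN p hp).trans ih

lemma exists_forall_mul_le {f g : ι → ℝ} (hf₀ : ∀ i, 0 ≤ f i) (hg₀ : ∀ i, 0 ≤ g i)
    (hf : ∃ C, ∀ i, f i ≤ C) (hg : ∃ C, ∀ i, g i ≤ C) : ∃ C, ∀ i, f i * g i ≤ C := by
  obtain ⟨C, hC⟩ := hf
  obtain ⟨D, hD⟩ := hg
  exact ⟨C * D, fun i => mul_le_mul (hC i) (hD i) (hg₀ i) ((hf₀ i).trans (hC i))⟩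

end Bounds

lemma prod_range_succ_le_pow_of_monotone {r : ℕ → ℝ} (hr₀ : ∀ j, 0 ≤ r j) (hr : Monotone r)
    (p : ℕ) : ∏ j ∈ range (p + 1), r j ≤ r p ^ (p + 1) := by
  calc ∏ j ∈ range (p + 1), r j ≤ ∏ _j ∈ range (p + 1), r p :=
        prod_le_prod (fun j _ => hr₀ j) fun j hj => hr (mem_range_succ_iff.1 hj)
    _ = r p ^ (p + 1) := by rw [prod_const, card_range]

lemma exists_forall_pow_div_prod_le {r : ℕ → ℝ} (hr₀ : ∀ j, 0 < r j)
    (hr : Tendsto r atTop atTop) {h : ℝ} (hh : 0 ≤ h) :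
    ∃ C, ∀ p, h ^ p / ∏ j ∈ range (p + 1), r j ≤ C := by
  refine exists_forall_le_of_eventually_succ_le ?_
  filter_upwards [(tendsto_add_atTop_iff_nat 1).2 hr |>.eventually_ge_atTop h] with p hp
  rw [prod_range_succ, pow_succ, mul_div_mul_comm]
  exact mul_le_of_le_one_right (div_nonneg (pow_nonneg hh p) (prod_nonneg fun j _ => (hr₀ j).le))
    (div_le_one_of_le₀ hp (hr₀ _).le)

lemma tendsto_pow_mul_nhds_zero_of_forall_exists_le {a : ℕ → ℝ} (ha : ∀ p, 0 ≤ a p)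
    (H : ∀ h : ℝ, 0 < h → ∃ C, ∀ p, h ^ p * a p ≤ C) {h : ℝ} (hh : 0 < h) :
    Tendsto (fun p => h ^ p * a p) atTop (nhds 0) := by
  obtain ⟨C, hC⟩ := H (2 * h) (by positivity)
  have hgeom : Tendsto (fun p : ℕ => C * (1 / 2) ^ p) atTop (nhds 0) := by
    simpa using (tendsto_pow_atTop_nhds_zero_of_lt_one (by norm_num : (0 : ℝ) ≤ 1 / 2)
      (by norm_num)).const_mul C
  refine tendsto_of_tendsto_of_tendsto_of_le_of_le tendsto_const_nhds hgeom
    (fun p => mul_nonneg (pow_nonneg hh.le p) (ha p)) fun p => ?_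
  have := hC p
  rw [mul_pow] at this
  rw [div_pow, one_pow, mul_one_div, le_div_iff₀ (by positivity)]
  linarith

/-- For strictly increasing `q` this is `k + 1` on `[q (k - 1), q k)` (with `q (-1) := 0`); the
cut-off `m ≤ j` loses nothing because `m ≤ q m`. -/
def stepSeq (q : ℕ → ℕ) (j : ℕ) : ℕ :=
  1 + #{m ∈ range (j + 1) | q m ≤ j}

section StepSeq

variable {q : ℕ → ℕ}

lemma one_le_stepSeq (q : ℕ → ℕ) (j : ℕ) : 1 ≤ stepSeq q j :=
  Nat.le_add_right 1 _

lemma stepSeq_mono (q : ℕ → ℕ) : Monotone (stepSeq q) := by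
  intro j j' hj
  have hsub : {m ∈ range (j + 1) | q m ≤ j} ⊆ {m ∈ range (j' + 1) | q m ≤ j'} := by
    intro m hm
    simp only [mem_filter, mem_range] at hm ⊢
    omega
  exact Nat.add_le_add_left (card_le_card hsub) 1

lemma stepSeq_le_iff (hq : StrictMono q) {j k : ℕ} : stepSeq q j ≤ k + 1 ↔ j < q k := by
  constructor
  · intro hle
    by_contra! hk
    have hsub : range (k + 1) ⊆ {m ∈ range (j + 1) | q m ≤ j} := by
      intro m hm
      simp only [mem_filter, mem_range] at hm ⊢
      have := hq.le_apply (x := m)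
      have := hq.monotone (Nat.lt_succ_iff.1 hm)
      omega
    have := card_le_card hsub
    rw [card_range] at this
    unfold stepSeq at hle
    omega
  · intro hk
    have hsub : {m ∈ range (j + 1) | q m ≤ j} ⊆ range k := by
      intro m hm
      simp only [mem_filter, mem_range] at hm ⊢
      by_contra! hkm
      have := hq.monotone hkm
      omega
    have := card_le_card hsub
    rw [card_range] at this
    unfold stepSeq
    omega

lemma inFrakR_stepSeq (hq : StrictMono q) (hq₀ : 2 ≤ q 0) :
    inFrakR fun j => (stepSeq q j : ℝ) := by
  have hone : ∀ j < q 0, (stepSeq q j : ℝ) = 1 := fun j hj => by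
    exact_mod_cast le_antisymm ((stepSeq_le_iff hq).2 hj) (one_le_stepSeq q j)
  refine ⟨fun j => Nat.cast_pos.2 (one_le_stepSeq q j), Nat.mono_cast.comp (stepSeq_mono q),
    hone 0 (by omega), hone 1 (by omega), tendsto_natCast_atTop_atTop.comp ?_⟩
  refine (stepSeq_mono q).tendsto_atTop_atTop fun b => ⟨q b, ?_⟩
  have := (stepSeq_le_iff hq (j := q b) (k := b)).not.2 (lt_irrefl _)
  omega

lemma prod_stepSeq_le_pow (hq : StrictMono q) {p k : ℕ} (hp : p < q k) :
    ∏ j ∈ range (p + 1), (stepSeq q j : ℝ) ≤ ((k : ℝ) + 1) ^ (p + 1) := by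
  refine (prod_range_succ_le_pow_of_monotone (fun j => Nat.cast_nonneg _)
    (Nat.mono_cast.comp (stepSeq_mono q)) p).trans ?_
  exact pow_le_pow_left₀ (Nat.cast_nonneg _) (by exact_mod_cast (stepSeq_le_iff hq).2 hp) _

end StepSeq

section Komatsu

variable {a : ℕ → ℝ}

lemma exists_pos_forall_div_pow_le_of_forall_inFrakR
    (H : ∀ r, inFrakR r → ∃ C, ∀ p, a p / ∏ j ∈ range (p + 1), r j ≤ C) :
    ∃ h : ℝ, 0 < h ∧ ∃ C : ℝ, ∀ p, a p / h ^ p ≤ C := by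
  by_contra hne
  have hfreq : ∀ k : ℕ, ∃ᶠ p in atTop, ((k : ℝ) + 1) ^ (p + 2) < a p := by
    intro k
    have hk : (0 : ℝ) < k + 1 := by positivity
    refine (frequently_lt_of_not_exists_forall_le (fun hC => hne ⟨k + 1, hk, hC⟩)
      (((k : ℝ) + 1) ^ 2)).mono fun p hp => ?_
    rwa [lt_div_iff₀ (pow_pos hk p), ← pow_add, Nat.add_comm 2 p] at hp
  obtain ⟨P, hP, hPa⟩ := extraction_forall_of_frequently hfreq
  have hq : StrictMono fun k => P k + 2 := fun i j hij => Nat.add_lt_add_right (hP hij) 2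
  obtain ⟨C, hC⟩ := H _ (inFrakR_stepSeq hq (Nat.le_add_left 2 _))
  obtain ⟨k, hk⟩ := exists_nat_ge C
  set R := ∏ j ∈ range (P k + 1), (stepSeq (fun k => P k + 2) j : ℝ)
  have hR : R ≤ ((k : ℝ) + 1) ^ (P k + 1) := prod_stepSeq_le_pow hq (by omega)
  have hpos : 0 < R := prod_pos fun j _ => Nat.cast_pos.2 (one_le_stepSeq _ j)
  have hbig : (k : ℝ) + 1 < a (P k) / R := by
    rw [lt_div_iff₀ hpos]
    calc ((k : ℝ) + 1) * R ≤ ((k : ℝ) + 1) * ((k : ℝ) + 1) ^ (P k + 1) := by gcongr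
      _ = ((k : ℝ) + 1) ^ (P k + 2) := by ring
      _ < a (P k) := hPa k
  linarith [hC (P k)]

lemma exists_inFrakR_forall_mul_prod_le (ha : ∀ p, 0 ≤ a p)
    (H : ∀ h : ℝ, 0 < h → ∃ C, ∀ p, h ^ p * a p ≤ C) :
    ∃ r, inFrakR r ∧ ∃ C : ℝ, ∀ p, a p * ∏ j ∈ range (p + 1), r j ≤ C := by
  have hev : ∀ w : ℕ, ∀ᶠ N in atTop,
      2 ≤ N ∧ ∀ p, N ≤ p → a p * ((w + 2 : ℕ) : ℝ) ^ (p + 1) ≤ 1 := by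
    intro w
    have hlim := (tendsto_pow_mul_nhds_zero_of_forall_exists_le ha H
      (h := ((w + 2 : ℕ) : ℝ)) (by positivity)).const_mul ((w + 2 : ℕ) : ℝ)
    rw [mul_zero] at hlim
    refine (eventually_ge_atTop 2).and (eventually_forall_ge_atTop.2 ?_)
    filter_upwards [hlim.eventually_le_const zero_lt_one] with p hp
    rwa [pow_succ', mul_comm, mul_assoc]
  obtain ⟨q, hq, hqN⟩ := extraction_forall_of_eventually hev
  refine ⟨_, inFrakR_stepSeq hq (hqN 0).1, ?_⟩
  refine exists_forall_le_of_eventually_le (C := 1) (eventually_atTop.2 ⟨q 0, fun p hp => ?_⟩)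
  have hv : 2 ≤ stepSeq q p := by
    have := (stepSeq_le_iff hq (k := 0)).not.2 (not_lt.2 hp)
    omega
  have hqp : q (stepSeq q p - 2) ≤ p := by
    have := (stepSeq_le_iff hq (j := p) (k := stepSeq q p - 2)).not.1 (by omega)
    omega
  have hbound := (hqN (stepSeq q p - 2)).2 p hqp
  rw [Nat.sub_add_cancel hv] at hbound
  calc a p * ∏ j ∈ range (p + 1), (stepSeq q j : ℝ) ≤ a p * (stepSeq q p : ℝ) ^ (p + 1) :=
        mul_le_mul_of_nonneg_left (prod_range_succ_le_pow_of_monotone (fun j => Nat.cast_nonneg _)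
          (Nat.mono_cast.comp (stepSeq_mono q)) p) (ha p)
    _ ≤ 1 := hbound

end Komatsu

/-- Komatsu's lemma on the family 𝔖 (Lemma 2.1). -/
theorem stmt0 (a : ℕ → ℝ) (ha : ∀ p, 0 < a p) :
    ((∃ h : ℝ, 0 < h ∧ ∃ C : ℝ, ∀ p : ℕ, a p / h ^ p ≤ C) ↔
      (∀ r : ℕ → ℝ, inFrakR r → ∃ C : ℝ, ∀ p : ℕ,
        a p / (∏ j ∈ Finset.range (p+1), r j) ≤ C)) ∧
    ((∀ h : ℝ, 0 < h → ∃ C : ℝ, ∀ p : ℕ, h ^ p * a p ≤ C) ↔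
      (∃ r : ℕ → ℝ, inFrakR r ∧ ∃ C : ℝ, ∀ p : ℕ,
        a p * (∏ j ∈ Finset.range (p+1), r j) ≤ C)) := by
  have hprod : ∀ r, inFrakR r → ∀ p, 0 < ∏ j ∈ range (p + 1), r j :=
    fun r hr p => prod_pos fun j _ => hr.1 j
  refine ⟨⟨fun ⟨h, hh, hbdd⟩ r hr => ?_, exists_pos_forall_div_pow_le_of_forall_inFrakR⟩,
    ⟨exists_inFrakR_forall_mul_prod_le fun p => (ha p).le, fun ⟨r, hr, hbdd⟩ h hh => ?_⟩⟩
  · obtain ⟨C, hC⟩ := exists_forall_mul_le (fun p => by positivity [ha p])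
      (fun p => by positivity [hprod r hr p]) hbdd
      (exists_forall_pow_div_prod_le hr.1 hr.2.2.2.2 hh.le)
    exact ⟨C, fun p => by rw [← div_mul_div_cancel₀ (pow_pos hh p).ne']; exact hC p⟩
  · obtain ⟨C, hC⟩ := exists_forall_mul_le (fun p => by positivity [hprod r hr p])
      (fun p => by positivity [ha p, hprod r hr p])
      (exists_forall_pow_div_prod_le hr.1 hr.2.2.2.2 hh.le) hbdd
    refine ⟨C, fun p => le_of_eq_of_le ?_ (hC p)⟩
    field_simp [(hprod r hr p).ne']
end
end

section
/- Let E be a locally convex Hausdorff topological vector space, let B ⊆ E be a non-empty bounded, absolutely convex, closed set, and let f ∈ C^∞(ℝ^d; E). Fix x_0 ∈ ℝ^d, a multi-index α ∈ ℕ^d, and R > 0 such that ∂^β f(y) ∈ R·B for all y with |y − x_0| ≤ 1 and all multi-indices β with |β| = |α| + 2. Then for every x with 0 < |x − x_0| ≤ 1 one has gauge_B( ∂^α f(x) − ∂^α f(x_0) − Σ_{j=1}^d (x_j − x_{0,j}) ∂^{α+e_j} f(x_0) ) ≤ d² R |x − x_0|², where gauge_B denotes the Minkowski functional of B and e_j is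 the j-th standard unit multi-index. (Consequently, a smooth E-valued function whose derivatives are locally uniformly absorbed by B is smooth as a map into the normed space spanned by B.) -/
/-!
Pairing with a continuous functional `e` turns the estimate into one for the scalar smooth
function `e ∘ f`: there the second-order Taylor remainder of `∂^α (e ∘ f)` is bounded, by two
applications of the mean value inequality, by `d²` times a bound on the derivatives of order
`|α| + 2`. If the remainder `v` of `f` itself were not in `c • B` with
`c = d² R |x - x₀|²`, Hahn–Banach would give a functional separating `v` from the closed convex
set `c • B`, and the scalar estimate for that functional contradicts the separation.
-/

open Filter MeasureTheory
open scoped BigOperators Pointwise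

noncomputable section

abbrev Rd (d : ℕ) := EuclideanSpace ℝ (Fin d)

/-- Partial derivative in the `j`-th coordinate direction. -/
def dop {d : ℕ} {E : Type*} [NormedAddCommGroup E] [NormedSpace ℝ E]
    (j : Fin d) (f : Rd d → E) : Rd d → E :=
  fun x => fderiv ℝ f x (EuclideanSpace.single j (1:ℝ))

/-- Iterated partial derivative `∂^α` for a multi-index `α : Fin d → ℕ`. -/
def pD {d : ℕ} {E : Type*} [NormedAddCommGroup E] [NormedSpace ℝ E]
    (α : Fin d → ℕ) (f : Rd d → E) : Rd d → E :=
  (List.finRange d).foldr (fun j g => (dop j)^[α j] g) f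

/-- Length `|α|` of a multi-index. -/
def msize {d : ℕ} (α : Fin d → ℕ) : ℕ := ∑ j, α j

/-- The `j`-th standard unit multi-index. -/
def unitIdx {d : ℕ} (j : Fin d) : Fin d → ℕ := fun i => if i = j then 1 else 0

open scoped ContDiff

section Coordinates

variable {ι : Type*} [Fintype ι] [DecidableEq ι] {E : Type*} [NormedAddCommGroup E]
  [NormedSpace ℝ E]

lemma EuclideanSpace.sum_smul_single_one (v : EuclideanSpace ℝ ι) :
    ∑ j, v j • EuclideanSpace.single j (1 : ℝ) = v := by
  simpa [EuclideanSpace.basisFun_apply, EuclideanSpace.basisFun_repr] using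
    (EuclideanSpace.basisFun ι ℝ).sum_repr v

lemma ContinuousLinearMap.apply_eq_sum_single (L : EuclideanSpace ℝ ι →L[ℝ] E)
    (v : EuclideanSpace ℝ ι) : L v = ∑ j, v j • L (EuclideanSpace.single j 1) := by
  conv_lhs => rw [← EuclideanSpace.sum_smul_single_one v]
  simp only [map_sum, map_smul]

lemma ContinuousLinearMap.norm_le_of_norm_apply_single_single_le
    (A : EuclideanSpace ℝ ι →L[ℝ] EuclideanSpace ℝ ι →L[ℝ] E) {M : ℝ} (hM : 0 ≤ M)
    (hA : ∀ i j, ‖A (EuclideanSpace.single i 1) (EuclideanSpace.single j 1)‖ ≤ M) :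
    ‖A‖ ≤ (Fintype.card ι : ℝ) ^ 2 * M := by
  refine A.opNorm_le_bound (by positivity) fun u => ?_
  refine (A u).opNorm_le_bound (by positivity) fun v => ?_
  have hexpand : A u v = ∑ i, ∑ j, (u i * v j) •
      A (EuclideanSpace.single i 1) (EuclideanSpace.single j 1) := by
    rw [A.apply_eq_sum_single u, sum_apply, Finset.sum_congr rfl]
    intro i _
    rw [smul_apply, ContinuousLinearMap.apply_eq_sum_single _ v, Finset.smul_sum]
    simp only [smul_smul]
  calc ‖A u v‖
      ≤ ∑ i, ∑ j, ‖u‖ * ‖v‖ * M := by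
        rw [hexpand]
        refine (norm_sum_le _ _).trans (Finset.sum_le_sum fun i _ => ?_)
        refine (norm_sum_le _ _).trans (Finset.sum_le_sum fun j _ => ?_)
        rw [norm_smul, norm_mul]
        gcongr
        · exact PiLp.norm_apply_le u i
        · exact PiLp.norm_apply_le v j
        · exact hA i j
    _ = (Fintype.card ι : ℝ) ^ 2 * M * ‖u‖ * ‖v‖ := by
        simp only [Finset.sum_const, Finset.card_univ, nsmul_eq_mul]
        ring

end Coordinates

section Taylor

variable {F : Type*} [NormedAddCommGroup F] [NormedSpace ℝ F] {E : Type*}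
  [NormedAddCommGroup E] [NormedSpace ℝ E]

lemma norm_sub_sub_fderiv_le_of_norm_fderiv_fderiv_le {h : F → E} (hh : ContDiff ℝ 2 h)
    (x₀ x : F) {M : ℝ} (hM : 0 ≤ M)
    (hbd : ∀ y ∈ Metric.closedBall x₀ ‖x - x₀‖, ‖fderiv ℝ (fderiv ℝ h) y‖ ≤ M) :
    ‖h x - h x₀ - fderiv ℝ h x₀ (x - x₀)‖ ≤ M * ‖x - x₀‖ ^ 2 := by
  set s := Metric.closedBall x₀ ‖x - x₀‖
  have hs : Convex ℝ s := convex_closedBall _ _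
  have hx₀s : x₀ ∈ s := Metric.mem_closedBall_self (norm_nonneg _)
  have hxs : x ∈ s := by simp [s, dist_eq_norm]
  have hdiff : Differentiable ℝ h := hh.differentiable (by norm_num)
  have hdiff' : Differentiable ℝ (fderiv ℝ h) :=
    (hh.fderiv_right (m := 1) le_rfl).differentiable one_ne_zero
  have hfderiv : ∀ y ∈ s, ‖fderiv ℝ h y - fderiv ℝ h x₀‖ ≤ M * ‖x - x₀‖ := fun y hy =>
    (hs.norm_image_sub_le_of_norm_fderiv_le (fun z _ => hdiff' z) hbd hx₀s hy).trans
      (mul_le_mul_of_nonneg_left (by simpa [s, dist_eq_norm] using hy) hM)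
  have hmv := hs.norm_image_sub_le_of_norm_hasFDerivWithin_le
    (f := fun y => h y - fderiv ℝ h x₀ y)
    (fun z _ => ((hdiff z).hasFDerivAt.sub (fderiv ℝ h x₀).hasFDerivAt).hasFDerivWithinAt)
    hfderiv hx₀s hxs
  calc ‖h x - h x₀ - fderiv ℝ h x₀ (x - x₀)‖
      = ‖(h x - fderiv ℝ h x₀ x) - (h x₀ - fderiv ℝ h x₀ x₀)‖ := by
        rw [map_sub]; congr 1; abel
    _ ≤ M * ‖x - x₀‖ * ‖x - x₀‖ := hmv
    _ = M * ‖x - x₀‖ ^ 2 := by ring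

end Taylor

section PartialDerivatives

variable {d : ℕ} {E : Type*} [NormedAddCommGroup E] [NormedSpace ℝ E]

lemma contDiff_dop {g : Rd d → E} (hg : ContDiff ℝ ∞ g) (j : Fin d) :
    ContDiff ℝ ∞ (dop j g) :=
  (hg.fderiv_right (m := ∞) le_rfl).clm_apply contDiff_const

lemma contDiff_iterate_dop {g : Rd d → E} (hg : ContDiff ℝ ∞ g) (j : Fin d) (n : ℕ) :
    ContDiff ℝ ∞ ((dop j)^[n] g) := by
  induction n with
  | zero => exact hg
  | succ n ih => rw [Function.iterate_succ_apply']; exact contDiff_dop ih j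

lemma contDiff_foldr_iterate_dop (α : Fin d → ℕ) (l : List (Fin d)) {g : Rd d → E}
    (hg : ContDiff ℝ ∞ g) : ContDiff ℝ ∞ (l.foldr (fun j h => (dop j)^[α j] h) g) := by
  induction l with
  | nil => exact hg
  | cons i t ih => exact contDiff_iterate_dop ih i (α i)

lemma contDiff_pD (α : Fin d → ℕ) {g : Rd d → E} (hg : ContDiff ℝ ∞ g) :
    ContDiff ℝ ∞ (pD α g) :=
  contDiff_foldr_iterate_dop α _ hg

lemma fderiv_apply_eq_sum_dop (h : Rd d → E) (x v : Rd d) :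
    fderiv ℝ h x v = ∑ j, v j • dop j h x :=
  (fderiv ℝ h x).apply_eq_sum_single v

lemma dop_dop_apply {g : Rd d → E} (hg : ContDiff ℝ 2 g) (i j : Fin d) (x : Rd d) :
    dop i (dop j g) x =
      fderiv ℝ (fderiv ℝ g) x (EuclideanSpace.single i 1) (EuclideanSpace.single j 1) := by
  have hdiff : DifferentiableAt ℝ (fderiv ℝ g) x :=
    ((hg.fderiv_right (m := 1) le_rfl).differentiable one_ne_zero).differentiableAt
  change fderiv ℝ (fun y => fderiv ℝ g y (EuclideanSpace.single j 1)) x _ = _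
  simp [fderiv_clm_apply hdiff (differentiableAt_const _)]

lemma dop_comm {g : Rd d → E} (hg : ContDiff ℝ 2 g) (i j : Fin d) :
    dop i (dop j g) = dop j (dop i g) := by
  funext x
  rw [dop_dop_apply hg, dop_dop_apply hg]
  exact second_derivative_symmetric
    (fun y => (hg.differentiable two_ne_zero).differentiableAt.hasFDerivAt)
    (((hg.fderiv_right (m := 1) le_rfl).differentiable one_ne_zero).differentiableAt.hasFDerivAt)
    _ _

lemma dop_iterate_dop_comm {g : Rd d → E} (hg : ContDiff ℝ ∞ g) (i j : Fin d) (n : ℕ) :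
    dop j ((dop i)^[n] g) = (dop i)^[n] (dop j g) := by
  induction n with
  | zero => rfl
  | succ n ih =>
      rw [Function.iterate_succ_apply', Function.iterate_succ_apply',
        dop_comm ((contDiff_iterate_dop hg i n).of_le (by norm_cast)) j i, ih]

lemma foldr_iterate_dop_congr {α α' : Fin d → ℕ} (l : List (Fin d))
    (h : ∀ i ∈ l, α i = α' i) (g : Rd d → E) :
    l.foldr (fun j h => (dop j)^[α j] h) g = l.foldr (fun j h => (dop j)^[α' j] h) g := by
  induction l with
  | nil => rfl
  | cons i t ih =>
      rw [List.foldr_cons, List.foldr_cons, ih (fun i hi => h i (List.mem_cons_of_mem _ hi)),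
        h i List.mem_cons_self]

lemma foldr_iterate_dop_add_unitIdx {α : Fin d → ℕ} {j : Fin d} {l : List (Fin d)}
    (hnd : l.Nodup) (hj : j ∈ l) {g : Rd d → E} (hg : ContDiff ℝ ∞ g) :
    l.foldr (fun i h => (dop i)^[(α + unitIdx j) i] h) g =
      dop j (l.foldr (fun i h => (dop i)^[α i] h) g) := by
  induction l with
  | nil => simp at hj
  | cons i t ih =>
      obtain ⟨hit, hndt⟩ := List.nodup_cons.1 hnd
      rw [List.foldr_cons, List.foldr_cons]
      rcases List.mem_cons.1 hj with rfl | hjt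
      · rw [foldr_iterate_dop_congr t (α' := α) (fun i' hi' => by
            simp [unitIdx, show i' ≠ j from fun h => hit (h ▸ hi')]) g]
        simp [unitIdx, Function.iterate_succ_apply']
      · have hij : i ≠ j := fun h => hit (h ▸ hjt)
        have hiα : (α + unitIdx j) i = α i := by simp [unitIdx, hij]
        rw [hiα, ih hndt hjt, dop_iterate_dop_comm (contDiff_foldr_iterate_dop α t hg)]

lemma pD_add_unitIdx (α : Fin d → ℕ) (j : Fin d) {g : Rd d → E} (hg : ContDiff ℝ ∞ g) :
    pD (α + unitIdx j) g = dop j (pD α g) :=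
  foldr_iterate_dop_add_unitIdx (List.nodup_finRange d) (List.mem_finRange j) hg

lemma msize_add (α β : Fin d → ℕ) : msize (α + β) = msize α + msize β := by
  simp [msize, Finset.sum_add_distrib]

lemma msize_unitIdx (j : Fin d) : msize (unitIdx j) = 1 := by
  simp [msize, unitIdx]

lemma norm_taylor_remainder_pD_le {g : Rd d → E} (hg : ContDiff ℝ ∞ g) (x₀ x : Rd d)
    (α : Fin d → ℕ) {M : ℝ} (hM : 0 ≤ M) (hx : ‖x - x₀‖ ≤ 1)
    (hbd : ∀ y : Rd d, ‖y - x₀‖ ≤ 1 → ∀ β, msize β = msize α + 2 → ‖pD β g y‖ ≤ M) :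
    ‖pD α g x - pD α g x₀ - ∑ j, (x j - x₀ j) • pD (α + unitIdx j) g x₀‖
      ≤ (d : ℝ) ^ 2 * M * ‖x - x₀‖ ^ 2 := by
  have hα : ContDiff ℝ ∞ (pD α g) := contDiff_pD α hg
  have hlinear : fderiv ℝ (pD α g) x₀ (x - x₀) =
      ∑ j, (x j - x₀ j) • pD (α + unitIdx j) g x₀ := by
    simp only [fderiv_apply_eq_sum_dop, pD_add_unitIdx α _ hg, PiLp.sub_apply]
  rw [← hlinear]
  refine norm_sub_sub_fderiv_le_of_norm_fderiv_fderiv_le (hα.of_le (by norm_cast)) x₀ x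
    (by positivity) fun y hy => ?_
  simpa using (fderiv ℝ (fderiv ℝ (pD α g)) y).norm_le_of_norm_apply_single_single_le hM
    fun i j => by
      rw [← dop_dop_apply (hα.of_le (by norm_cast)), ← pD_add_unitIdx α j hg, ← pD_add_unitIdx _ i hg]
      refine hbd y ((mem_closedBall_iff_norm.1 hy).trans hx) _ ?_
      simp only [msize_add, msize_unitIdx]

end PartialDerivatives

lemma mem_smul_set_of_forall_dual_le {E : Type*} [AddCommGroup E] [Module ℝ E]
    [TopologicalSpace E] [IsTopologicalAddGroup E] [ContinuousSMul ℝ E]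
    [LocallyConvexSpace ℝ E] {B : Set E} (hconv : Convex ℝ B) (hcl : IsClosed B)
    {c : ℝ} (hc : 0 < c) {v : E}
    (h : ∀ (e : E →L[ℝ] ℝ) (M : ℝ), (∀ b ∈ B, e b ≤ M) → e v ≤ c * M) : v ∈ c • B := by
  by_contra hv
  obtain ⟨e, u, hsep, hu⟩ :=
    geometric_hahn_banach_closed_point (hconv.smul c) (hcl.smul_of_ne_zero hc.ne') hv
  have hB : ∀ b ∈ B, e b ≤ u / c := fun b hb => by
    have := hsep _ (Set.smul_mem_smul_set hb)
    rw [map_smul, smul_eq_mul] at this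
    rw [le_div_iff₀ hc]
    linarith
  have := h e _ hB
  rw [mul_div_cancel₀ _ hc.ne'] at this
  linarith

lemma Balanced.abs_le_of_forall_le {E : Type*} [AddCommGroup E] [Module ℝ E]
    [TopologicalSpace E] {B : Set E} (hB : Balanced ℝ B) {e : E →L[ℝ] ℝ} {M : ℝ}
    (he : ∀ b ∈ B, e b ≤ M) {b : E} (hb : b ∈ B) : |e b| ≤ M := by
  have := he _ (hB.neg_mem_iff.2 hb)
  rw [map_neg] at this
  exact abs_le.2 ⟨by linarith, he b hb⟩

/-- `D β` plays the role of `∂^β f`; smoothness of `f` is only required weakly, after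
composing with continuous linear functionals. -/
theorem stmt2_general {d : ℕ} {E : Type*} [AddCommGroup E] [Module ℝ E] [TopologicalSpace E]
    [IsTopologicalAddGroup E] [ContinuousSMul ℝ E] [LocallyConvexSpace ℝ E]
    (B : Set E) (hBne : B.Nonempty) (hBconv : Convex ℝ B) (hBbal : Balanced ℝ B)
    (hBcl : IsClosed B)
    (f : Rd d → E) (D : (Fin d → ℕ) → Rd d → E)
    (hweakSmooth : ∀ e' : E →L[ℝ] ℝ, ContDiff ℝ (⊤ : ℕ∞) (fun x => e' (f x)) ∧
      ∀ β : Fin d → ℕ, pD β (fun x => e' (f x)) = fun x => e' (D β x))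
    (x₀ : Rd d) (α : Fin d → ℕ) (R : ℝ) (hR : 0 < R)
    (hbound : ∀ y : Rd d, ‖y - x₀‖ ≤ 1 → ∀ β : Fin d → ℕ,
      msize β = msize α + 2 → D β y ∈ R • B) :
    ∀ x : Rd d, 0 < ‖x - x₀‖ → ‖x - x₀‖ ≤ 1 →
      gauge B (D α x - D α x₀ -
          ∑ j : Fin d, (x j - x₀ j) • D (α + unitIdx j) x₀)
        ≤ (d : ℝ)^2 * R * ‖x - x₀‖^2 := by
  intro x hx₀ hx
  have hd : 0 < d := Nat.pos_of_ne_zero fun hd => by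
    subst hd
    exact hx₀.ne' (by simp [Subsingleton.elim x x₀])
  refine gauge_le_of_mem (by positivity) (mem_smul_set_of_forall_dual_le hBconv hBcl
    (by positivity) fun e M he => ?_)
  obtain ⟨hsmooth, hpD⟩ := hweakSmooth e
  have hM : 0 ≤ M := (abs_nonneg _).trans (hBbal.abs_le_of_forall_le he (hBbal.zero_mem hBne))
  have htaylor := norm_taylor_remainder_pD_le hsmooth x₀ x α (M := R * M) (by positivity) hx
    fun y hy β hβ => by
      obtain ⟨b, hb, hDb⟩ := hbound y hy β hβ
      simp only [hpD, ← hDb, map_smul, smul_eq_mul, norm_mul, Real.norm_of_nonneg hR.le]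
      exact mul_le_mul_of_nonneg_left (hBbal.abs_le_of_forall_le he hb) hR.le
  simp only [hpD] at htaylor
  simp only [map_sub, map_sum, map_smul, smul_eq_mul]
  exact (le_of_abs_le htaylor).trans_eq (by ring)

/-- Taylor estimate in the gauge of `B` for weakly smooth functions with values in a
locally convex Hausdorff space (Lemma 4.3). Here `D β` plays the role of `∂^β f`; weak
`C^∞`-smoothness is expressed by composing with continuous linear functionals. -/
theorem stmt2 {d : ℕ} {E : Type*} [AddCommGroup E] [Module ℝ E] [TopologicalSpace E]
    [IsTopologicalAddGroup E] [ContinuousSMul ℝ E] [LocallyConvexSpace ℝ E] [T2Space E]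
    (B : Set E) (hBne : B.Nonempty) (hBconv : Convex ℝ B) (hBbal : Balanced ℝ B)
    (hBcl : IsClosed B) (hBbdd : Bornology.IsVonNBounded ℝ B)
    (f : Rd d → E) (D : (Fin d → ℕ) → Rd d → E)
    (hD0 : D 0 = f)
    (hweakSmooth : ∀ e' : E →L[ℝ] ℝ, ContDiff ℝ (⊤ : ℕ∞) (fun x => e' (f x)) ∧
      ∀ β : Fin d → ℕ, pD β (fun x => e' (f x)) = fun x => e' (D β x))
    (x₀ : Rd d) (α : Fin d → ℕ) (R : ℝ) (hR : 0 < R)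
    (hbound : ∀ y : Rd d, ‖y - x₀‖ ≤ 1 → ∀ β : Fin d → ℕ,
      msize β = msize α + 2 → D β y ∈ R • B) :
    ∀ x : Rd d, 0 < ‖x - x₀‖ → ‖x - x₀‖ ≤ 1 →
      gauge B (D α x - D α x₀ -
          ∑ j : Fin d, (x j - x₀ j) • D (α + unitIdx j) x₀)
        ≤ (d : ℝ)^2 * R * ‖x - x₀‖^2 :=
  stmt2_general B hBne hBconv hBbal hBcl f D hweakSmooth x₀ α R hR hbound
end
end

section
/- Let M be a weight sequence satisfying (M.2)*. Then there exists a non-decreasing continuous function ν : [0,∞) → [0,∞) such that (i) ν ≍ ν_M, i.e., ν(t) = O(ν_M(t)) and ν_M(t) = O(ν(t)) as t → ∞; and (ii) there exist a continuous function η : [0,∞) → [0,∞) with η(t) = o(ν(t)) as t → ∞ and N ∈ ℕ such that |ν(t_1) − ν(t_2)| ≤ η(t_2)(1 + |t_1 − t_2|)^N for all t_1, t_2 ≥ 0. -/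
/-!
For `b ≥ 1` the supremum defining `ν_M(b)` is attained at `λ(b) = max {p : m_p ≤ b}`, because
`b^p / M_p` increases exactly while `m_p ≤ b`. Comparing this term at `a` and at `b` gives
`ν_M(b) - ν_M(a) ≤ λ(b) log (b / a) ≤ λ(b) (b - a) / a` for `1 ≤ a ≤ b`, so `ν = ν_M(max · 1)` is
locally Lipschitz and everything reduces to controlling `λ`. Condition (M.2)* yields the doubling
estimate `λ(2b) + p₀ + 1 ≤ 2N (λ(b) + p₀ + 1)`, hence `λ(cb) ≲ c^(N+1) λ(b)` for `c ≥ 1`; with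
`λ(b) log 2 ≤ ν_M(2b)` it also gives `λ(b) ≤ A (ν_M(b) + 1)`. Therefore
`η(t) = 2NA (ν(t) + 1) / max t 1` works, and `η = o(ν)` because `ν → ∞`.
-/

open Filter MeasureTheory
open scoped BigOperators

noncomputable section

/-- `M` is a weight sequence: positive, normalized, `M_p^{1/p} → ∞`, log-convex. -/
def IsWeightSeq (M : ℕ → ℝ) : Prop :=
  (∀ p, 0 < M p) ∧ M 0 = 1 ∧ M 1 = 1 ∧
  Tendsto (fun p : ℕ => (M p) ^ ((p : ℝ)⁻¹)) atTop atTop ∧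
  ∀ p : ℕ, 1 ≤ p → (M p)^2 ≤ M (p-1) * M (p+1)

/-- Condition (M.2) with explicit constants `C₀, H ≥ 1`. -/
def HasM2 (M : ℕ → ℝ) (C₀ H : ℝ) : Prop :=
  1 ≤ C₀ ∧ 1 ≤ H ∧ ∀ p q : ℕ, M (p+q) ≤ C₀ * H^(p+q) * M p * M q

/-- Condition (M.2). -/
def M2 (M : ℕ → ℝ) : Prop := ∃ C₀ H, HasM2 M C₀ H

/-- Condition (M.2)*: `2 m_p ≤ m_{Np}` for `p ≥ p₀`. -/
def M2star (M : ℕ → ℝ) : Prop :=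
  ∃ p₀ N : ℕ, 0 < p₀ ∧ 0 < N ∧
    ∀ p, p₀ ≤ p → 2 * (M p / M (p-1)) ≤ M (N*p) / M (N*p - 1)

/-- Associated function `ν_M(t) = sup_p log(t^p / M_p)`. -/
def nuA (M : ℕ → ℝ) (t : ℝ) : ℝ := ⨆ p : ℕ, Real.log (t ^ p / M p)

namespace IsWeightSeq

variable {M : ℕ → ℝ}

/-- The quotient `m_p = M_p / M_{p-1}`; truncated subtraction makes `ratio M 0 = 1`. -/
def ratio (M : ℕ → ℝ) (p : ℕ) : ℝ := M p / M (p - 1)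

/-- For `b ≥ 1` this is the largest `p` with `m_p ≤ b`, i.e. the counting function
`#{p ≥ 1 : m_p ≤ b}` of the paper. -/
def counting (M : ℕ → ℝ) (b : ℝ) : ℕ := sSup {p | ratio M p ≤ b}

theorem pos (hM : IsWeightSeq M) (p : ℕ) : 0 < M p := hM.1 p

theorem ratio_pos (hM : IsWeightSeq M) (p : ℕ) : 0 < ratio M p :=
  div_pos (hM.pos p) (hM.pos _)

theorem ratio_zero (hM : IsWeightSeq M) : ratio M 0 = 1 := div_self (hM.pos 0).ne'

theorem mul_ratio_succ (hM : IsWeightSeq M) (p : ℕ) : M p * ratio M (p + 1) = M (p + 1) := by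
  rw [ratio, Nat.add_sub_cancel, mul_div_cancel₀ _ (hM.pos p).ne']

theorem ratio_monotone (hM : IsWeightSeq M) : Monotone (ratio M) := by
  refine monotone_nat_of_le_succ fun p => ?_
  rcases Nat.eq_zero_or_pos p with rfl | hp
  · simp [ratio, hM.2.1, hM.2.2.1]
  · have hconv := hM.2.2.2.2 p hp
    rw [ratio, ratio, Nat.add_sub_cancel, div_le_div_iff₀ (hM.pos _) (hM.pos _)]
    nlinarith

theorem le_ratio_pow (hM : IsWeightSeq M) (p : ℕ) : M p ≤ ratio M p ^ p := by
  induction p with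
  | zero => simp [hM.2.1]
  | succ p ih =>
    rw [← hM.mul_ratio_succ, pow_succ]
    refine mul_le_mul_of_nonneg_right (ih.trans ?_) (hM.ratio_pos _).le
    exact pow_le_pow_left₀ (hM.ratio_pos p).le (hM.ratio_monotone p.le_succ) p

theorem tendsto_ratio (hM : IsWeightSeq M) : Tendsto (ratio M) atTop atTop := by
  refine tendsto_atTop_mono' atTop ?_ hM.2.2.2.1
  filter_upwards [eventually_ge_atTop 1] with p hp
  calc M p ^ (p : ℝ)⁻¹ ≤ (ratio M p ^ p) ^ (p : ℝ)⁻¹ :=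
        Real.rpow_le_rpow (hM.pos p).le (hM.le_ratio_pow p) (by positivity)
    _ = ratio M p := Real.pow_rpow_inv_natCast (hM.ratio_pos p).le (by omega)

theorem ratio_le_iff_le_counting (hM : IsWeightSeq M) {b : ℝ} (hb : 1 ≤ b) {p : ℕ} :
    ratio M p ≤ b ↔ p ≤ counting M b := by
  have hbdd : BddAbove {p | ratio M p ≤ b} := by
    obtain ⟨q, hq⟩ := (hM.tendsto_ratio.eventually_gt_atTop b).exists_forall_of_atTop
    exact ⟨q, fun p hp => not_lt.1 fun hqp => (hq p hqp.le).not_ge hp⟩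
  have hzero : 0 ∈ {p | ratio M p ≤ b} := by simpa [hM.ratio_zero] using hb
  exact ⟨fun h => le_csSup hbdd h,
    fun h => (hM.ratio_monotone h).trans (Nat.sSup_mem ⟨0, hzero⟩ hbdd)⟩

theorem counting_mono (hM : IsWeightSeq M) {a b : ℝ} (ha : 1 ≤ a) (hab : a ≤ b) :
    counting M a ≤ counting M b :=
  (hM.ratio_le_iff_le_counting (ha.trans hab)).1
    (((hM.ratio_le_iff_le_counting ha).2 le_rfl).trans hab)

theorem pow_div_le_pow_counting_div (hM : IsWeightSeq M) {b : ℝ} (hb : 1 ≤ b) (p : ℕ) :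
    b ^ p / M p ≤ b ^ counting M b / M (counting M b) := by
  set L := counting M b
  set f : ℕ → ℝ := fun n => b ^ n / M n
  have hf_pos : ∀ n, 0 < f n := fun n => div_pos (by positivity) (hM.pos n)
  have hf_succ : ∀ n, f (n + 1) = f n * (b / ratio M (n + 1)) := by
    intro n
    simp only [f, ← hM.mul_ratio_succ n, pow_succ]
    field_simp [(hM.pos n).ne', (hM.ratio_pos (n + 1)).ne']
  rcases le_total p L with hpL | hLp
  · suffices ∀ n, p ≤ n → n ≤ L → f p ≤ f n from this L hpL le_rfl
    intro n hpn
    induction n, hpn using Nat.le_induction with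
    | base => exact fun _ => le_rfl
    | succ n _ ih =>
      intro hn
      have hratio : ratio M (n + 1) ≤ b := (hM.ratio_le_iff_le_counting hb).2 hn
      rw [hf_succ]
      exact (ih (by omega)).trans (le_mul_of_one_le_right (hf_pos n).le
        ((one_le_div (hM.ratio_pos _)).2 hratio))
  · change f p ≤ f L
    induction p, hLp using Nat.le_induction with
    | base => exact le_rfl
    | succ n hn ih =>
      have hratio : b < ratio M (n + 1) :=
        not_le.1 fun h => by have := (hM.ratio_le_iff_le_counting hb).1 h; omega
      rw [hf_succ]
      exact (mul_le_of_le_one_right (hf_pos n).le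
        ((div_le_one (hM.ratio_pos _)).2 hratio.le)).trans ih

theorem nuA_eq (hM : IsWeightSeq M) {b : ℝ} (hb : 1 ≤ b) :
    nuA M b = Real.log (b ^ counting M b / M (counting M b)) := by
  have hpos : ∀ p, 0 < b ^ p / M p := fun p => div_pos (by positivity) (hM.pos p)
  have hle : ∀ p, Real.log (b ^ p / M p) ≤ Real.log (b ^ counting M b / M (counting M b)) :=
    fun p => Real.log_le_log (hpos p) (hM.pow_div_le_pow_counting_div hb p)
  exact le_antisymm (ciSup_le hle) (le_ciSup ⟨_, Set.forall_mem_range.2 hle⟩ _)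

theorem log_pow_div_le_nuA (hM : IsWeightSeq M) {b : ℝ} (hb : 1 ≤ b) (p : ℕ) :
    Real.log (b ^ p / M p) ≤ nuA M b := by
  rw [hM.nuA_eq hb]
  exact Real.log_le_log (div_pos (by positivity) (hM.pos p)) (hM.pow_div_le_pow_counting_div hb p)

theorem nuA_nonneg (hM : IsWeightSeq M) {b : ℝ} (hb : 1 ≤ b) : 0 ≤ nuA M b := by
  simpa [hM.2.1] using hM.log_pow_div_le_nuA hb 0

theorem tendsto_nuA (hM : IsWeightSeq M) : Tendsto (nuA M) atTop atTop := by
  refine tendsto_atTop_mono' atTop ?_ Real.tendsto_log_atTop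
  filter_upwards [eventually_ge_atTop 1] with b hb
  simpa [hM.2.2.1] using hM.log_pow_div_le_nuA hb 1

theorem nuA_mono (hM : IsWeightSeq M) {a b : ℝ} (ha : 1 ≤ a) (hab : a ≤ b) :
    nuA M a ≤ nuA M b := by
  rw [hM.nuA_eq ha]
  refine (Real.log_le_log (div_pos (by positivity) (hM.pos _)) ?_).trans
    (hM.log_pow_div_le_nuA (ha.trans hab) (counting M a))
  gcongr
  exact (hM.pos _).le

theorem nuA_sub_le (hM : IsWeightSeq M) {a b : ℝ} (ha : 1 ≤ a) (hab : a ≤ b) :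
    nuA M b - nuA M a ≤ counting M b * ((b - a) / a) := by
  set L := counting M b
  have ha0 : 0 < a := by linarith
  have hsplit : Real.log (b ^ L / M L) = Real.log (a ^ L / M L) + L * Real.log (b / a) := by
    rw [← Real.log_pow, ← Real.log_mul (div_pos (by positivity) (hM.pos L)).ne'
      (pow_pos (div_pos (by linarith) ha0) L).ne']
    congr 1
    field_simp
    rw [← mul_pow, mul_div_cancel₀ _ ha0.ne']
  have hlog : Real.log (b / a) ≤ (b - a) / a := by
    simpa [div_sub_one ha0.ne'] using Real.log_le_sub_one_of_pos (div_pos (by linarith) ha0)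
  rw [hM.nuA_eq (ha.trans hab), hsplit]
  have := mul_le_mul_of_nonneg_left hlog (Nat.cast_nonneg (α := ℝ) L)
  linarith [hM.log_pow_div_le_nuA ha L]

theorem counting_le_two_mul_nuA (hM : IsWeightSeq M) {b : ℝ} (hb : 1 ≤ b) :
    (counting M b : ℝ) ≤ 2 * nuA M (2 * b) := by
  set L := counting M b
  have hML : 1 ≤ b ^ L / M L := by
    simpa [hM.2.1] using hM.pow_div_le_pow_counting_div hb 0
  have hsplit : Real.log ((2 * b) ^ L / M L) = L * Real.log 2 + Real.log (b ^ L / M L) := by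
    rw [← Real.log_pow, ← Real.log_mul (by positivity) (by positivity), mul_pow, mul_div_assoc]
  have hlog2 : 1 / 2 ≤ Real.log 2 := by linarith [Real.log_two_gt_d9]
  have := hM.log_pow_div_le_nuA (by linarith : 1 ≤ 2 * b) L
  rw [hsplit] at this
  nlinarith [Real.log_nonneg hML, mul_le_mul_of_nonneg_left hlog2 (Nat.cast_nonneg (α := ℝ) L)]

theorem continuous_nuA_max_one (hM : IsWeightSeq M) : Continuous fun t => nuA M (max t 1) := by
  have hlip : ∀ T : ℝ,
      LipschitzOnWith (counting M (max T 1)) (fun t => nuA M (max t 1)) (Set.Iic T) := by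
    intro T
    refine LipschitzOnWith.of_le_add_mul _ fun x hx y _ => ?_
    have hdist : (0 : ℝ) ≤ counting M (max T 1) * dist x y := by positivity
    push_cast
    rcases le_total x y with hxy | hyx
    · have := hM.nuA_mono (le_max_right x 1) (max_le_max_right 1 hxy)
      linarith
    · have hsub := hM.nuA_sub_le (le_max_right y 1) (max_le_max_right 1 hyx)
      have hquot : (max x 1 - max y 1) / max y 1 ≤ dist x y :=
        (div_le_self (by linarith [max_le_max_right 1 hyx]) (le_max_right y 1)).trans
          ((le_abs_self _).trans (abs_max_sub_max_le_abs x y 1))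
      have hcount : (counting M (max x 1) : ℝ) ≤ counting M (max T 1) := by
        exact_mod_cast hM.counting_mono (le_max_right x 1) (max_le_max_right 1 hx)
      nlinarith [div_nonneg (sub_nonneg.2 (max_le_max_right 1 hyx)) (zero_le_one.trans
        (le_max_right y 1))]
  exact continuous_iff_continuousAt.2 fun x =>
    (hlip (x + 1)).continuousOn.continuousAt (Iic_mem_nhds (by linarith))

section M2star

variable {p₀ N : ℕ}

theorem counting_two_mul_le (hM : IsWeightSeq M) (hN : 0 < N)
    (hstar : ∀ p, p₀ ≤ p → 2 * ratio M p ≤ ratio M (N * p)) {b : ℝ} (hb : 1 ≤ b) :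
    counting M (2 * b) + (p₀ + 1) ≤ 2 * N * (counting M b + (p₀ + 1)) := by
  set q := counting M (2 * b)
  have hq : q < N * (q / N + 1) := Nat.lt_mul_div_succ q hN
  have hqN : q / N ≤ counting M b + p₀ := by
    rcases lt_or_ge (q / N) p₀ with h | h
    · omega
    · have h₁ : ratio M (N * (q / N)) ≤ ratio M q := hM.ratio_monotone (Nat.mul_div_le q N)
      have h₂ : ratio M q ≤ 2 * b := (hM.ratio_le_iff_le_counting (by linarith)).2 le_rfl
      have : q / N ≤ counting M b :=
        (hM.ratio_le_iff_le_counting hb).1 (by linarith [hstar _ h])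
      omega
  have h₁ : N * (q / N + 1) ≤ N * (counting M b + (p₀ + 1)) := Nat.mul_le_mul_left N (by omega)
  have h₂ : p₀ + 1 ≤ N * (counting M b + (p₀ + 1)) :=
    (Nat.le_add_left _ _).trans (Nat.le_mul_of_pos_left _ hN)
  linarith

theorem counting_two_pow_mul_le (hM : IsWeightSeq M) (hN : 0 < N)
    (hstar : ∀ p, p₀ ≤ p → 2 * ratio M p ≤ ratio M (N * p)) {b : ℝ} (hb : 1 ≤ b) (k : ℕ) :
    counting M (2 ^ k * b) + (p₀ + 1) ≤ (2 * N) ^ k * (counting M b + (p₀ + 1)) := by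
  induction k with
  | zero => simp
  | succ k ih =>
    have hk : 1 ≤ (2 : ℝ) ^ k * b := one_le_mul_of_one_le_of_one_le (one_le_pow₀ one_le_two) hb
    calc counting M (2 ^ (k + 1) * b) + (p₀ + 1)
        = counting M (2 * (2 ^ k * b)) + (p₀ + 1) := by rw [pow_succ, mul_comm _ (2 : ℝ), mul_assoc]
      _ ≤ 2 * N * (counting M (2 ^ k * b) + (p₀ + 1)) := hM.counting_two_mul_le hN hstar hk
      _ ≤ 2 * N * ((2 * N) ^ k * (counting M b + (p₀ + 1))) := Nat.mul_le_mul_left _ ih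
      _ = (2 * N) ^ (k + 1) * (counting M b + (p₀ + 1)) := by ring

theorem counting_mul_le (hM : IsWeightSeq M) (hN : 0 < N)
    (hstar : ∀ p, p₀ ≤ p → 2 * ratio M p ≤ ratio M (N * p)) {b c : ℝ} (hb : 1 ≤ b)
    (hc : 1 ≤ c) :
    (counting M (c * b) : ℝ) + (p₀ + 1) ≤ 2 * N * c ^ (N + 1) * (counting M b + (p₀ + 1)) := by
  obtain ⟨n, hn, hcn⟩ := exists_nat_pow_near hc one_lt_two
  have hmono : counting M (c * b) ≤ counting M (2 ^ (n + 1) * b) :=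
    hM.counting_mono (one_le_mul_of_one_le_of_one_le hc hb)
      (mul_le_mul_of_nonneg_right hcn.le (by linarith))
  have hiter : ((counting M (c * b) + (p₀ + 1) : ℕ) : ℝ)
      ≤ ((2 * N) ^ (n + 1) * (counting M b + (p₀ + 1)) : ℕ) := by
    exact_mod_cast (Nat.add_le_add_right hmono _).trans
      (hM.counting_two_pow_mul_le hN hstar hb (n + 1))
  have hpow : (2 * N : ℝ) ^ n ≤ c ^ (N + 1) := by
    have h2N : (2 * N : ℝ) ≤ 2 ^ (N + 1) := by
      rw [pow_succ, mul_comm]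
      gcongr
      exact_mod_cast Nat.lt_two_pow_self.le
    calc (2 * N : ℝ) ^ n ≤ (2 ^ (N + 1)) ^ n := pow_le_pow_left₀ (by positivity) h2N n
      _ = (2 ^ n) ^ (N + 1) := by rw [← pow_mul, ← pow_mul, mul_comm]
      _ ≤ c ^ (N + 1) := pow_le_pow_left₀ (by positivity) hn _
  push_cast at hiter
  calc (counting M (c * b) : ℝ) + (p₀ + 1)
      ≤ 2 * N * (2 * N : ℝ) ^ n * (counting M b + (p₀ + 1)) := by
        rw [pow_succ] at hiter; linarith
    _ ≤ 2 * N * c ^ (N + 1) * (counting M b + (p₀ + 1)) := by gcongr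

theorem exists_counting_add_le (hM : IsWeightSeq M) (hN : 0 < N)
    (hstar : ∀ p, p₀ ≤ p → 2 * ratio M p ≤ ratio M (N * p)) :
    ∃ A : ℝ, 0 ≤ A ∧ ∀ b, 1 ≤ b → (counting M b : ℝ) + (p₀ + 1) ≤ A * (nuA M b + 1) := by
  have hν₂ := hM.nuA_nonneg one_le_two
  refine ⟨2 * N * (2 * nuA M 2 + p₀ + 3), by positivity, fun b hb => ?_⟩
  set a := max (b / 2) 1
  have ha : 1 ≤ a := le_max_right _ _
  have h2a : 2 * a = max b 2 := by
    rw [mul_max_of_nonneg _ _ (by norm_num : (0 : ℝ) ≤ 2)]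
    congr 1 <;> ring
  have hcount : ((counting M b + (p₀ + 1) : ℕ) : ℝ)
      ≤ (2 * N * (counting M a + (p₀ + 1)) : ℕ) := by
    have hb2a : b ≤ 2 * a := h2a ▸ le_max_left _ _
    exact_mod_cast (Nat.add_le_add_right (hM.counting_mono hb hb2a) _).trans
      (hM.counting_two_mul_le hN hstar ha)
  have hmax : nuA M (2 * a) ≤ nuA M b + nuA M 2 := by
    rw [h2a]
    rcases le_total b 2 with h | h
    · rw [max_eq_right h]; linarith [hM.nuA_nonneg hb]
    · rw [max_eq_left h]; linarith
  have hνb := hM.nuA_nonneg hb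
  have hca : (counting M a : ℝ) + (p₀ + 1) ≤ (2 * nuA M 2 + p₀ + 3) * (nuA M b + 1) := by
    nlinarith [hM.counting_le_two_mul_nuA ha]
  push_cast at hcount
  calc (counting M b : ℝ) + (p₀ + 1) ≤ 2 * N * (counting M a + (p₀ + 1)) := hcount
    _ ≤ 2 * N * ((2 * nuA M 2 + p₀ + 3) * (nuA M b + 1)) := by gcongr
    _ = _ := by ring

theorem nuA_sub_le_at_left (hM : IsWeightSeq M) (hN : 0 < N)
    (hstar : ∀ p, p₀ ≤ p → 2 * ratio M p ≤ ratio M (N * p)) {A a b : ℝ}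
    (hA : (counting M a : ℝ) + (p₀ + 1) ≤ A * (nuA M a + 1)) (ha : 1 ≤ a) (hab : a ≤ b) :
    nuA M b - nuA M a ≤ 2 * N * A * (nuA M a + 1) / a * (1 + (b - a)) ^ (N + 2) := by
  set c := 1 + (b - a)
  have hc : 1 ≤ c := by linarith
  have hbc : b ≤ c * a := by nlinarith
  have hcount : (counting M b : ℝ) ≤ 2 * N * c ^ (N + 1) * (A * (nuA M a + 1)) := by
    have hmono : (counting M b : ℝ) ≤ counting M (c * a) := by
      exact_mod_cast hM.counting_mono (ha.trans hab) hbc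
    calc (counting M b : ℝ) ≤ counting M (c * a) + (p₀ + 1) := by linarith
      _ ≤ 2 * N * c ^ (N + 1) * (counting M a + (p₀ + 1)) := hM.counting_mul_le hN hstar ha hc
      _ ≤ 2 * N * c ^ (N + 1) * (A * (nuA M a + 1)) := by gcongr
  calc nuA M b - nuA M a ≤ counting M b * ((b - a) / a) := hM.nuA_sub_le ha hab
    _ ≤ 2 * N * c ^ (N + 1) * (A * (nuA M a + 1)) * (c / a) :=
        mul_le_mul hcount (by gcongr; linarith) (div_nonneg (by linarith) (by linarith))
          ((Nat.cast_nonneg _).trans hcount)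
    _ = 2 * N * A * (nuA M a + 1) / a * c ^ (N + 2) := by ring

theorem nuA_sub_le_at_right (hM : IsWeightSeq M) {A a b : ℝ}
    (hA : (counting M b : ℝ) ≤ A * (nuA M b + 1)) (ha : 1 ≤ a) (hab : a ≤ b) :
    nuA M b - nuA M a ≤ A * (nuA M b + 1) / b * (1 + (b - a)) ^ 2 := by
  have hquot : (b - a) / a ≤ (1 + (b - a)) ^ 2 / b := by
    have hbc : b ≤ (1 + (b - a)) * a := by nlinarith
    rw [div_le_div_iff₀ (by linarith) (by linarith)]
    nlinarith [mul_le_mul_of_nonneg_left hbc (sub_nonneg.2 hab)]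
  calc nuA M b - nuA M a ≤ counting M b * ((b - a) / a) := hM.nuA_sub_le ha hab
    _ ≤ A * (nuA M b + 1) * ((1 + (b - a)) ^ 2 / b) :=
        mul_le_mul hA hquot (div_nonneg (by linarith) (by linarith))
          ((Nat.cast_nonneg _).trans hA)
    _ = A * (nuA M b + 1) / b * (1 + (b - a)) ^ 2 := by ring

theorem abs_nuA_max_one_sub_le (hM : IsWeightSeq M) (hN : 0 < N)
    (hstar : ∀ p, p₀ ≤ p → 2 * ratio M p ≤ ratio M (N * p)) {A : ℝ}
    (hA : ∀ b, 1 ≤ b → (counting M b : ℝ) + (p₀ + 1) ≤ A * (nuA M b + 1)) (t₁ t₂ : ℝ) :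
    |nuA M (max t₁ 1) - nuA M (max t₂ 1)|
      ≤ 2 * N * A * (nuA M (max t₂ 1) + 1) / max t₂ 1 * (1 + |t₁ - t₂|) ^ (N + 2) := by
  have hbound_nonneg : ∀ x, 1 ≤ x → 0 ≤ A * (nuA M x + 1) / x := fun x hx =>
    div_nonneg ((by positivity : (0 : ℝ) ≤ counting M x + (p₀ + 1)).trans (hA x hx)) (by linarith)
  have hscale : ∀ x, 2 * N * A * (nuA M x + 1) / x = 2 * N * (A * (nuA M x + 1) / x) :=
    fun x => by ring
  have hN2 : (1 : ℝ) ≤ 2 * N := by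
    have : (1 : ℝ) ≤ N := by exact_mod_cast hN
    linarith
  have hgap : ∀ s t : ℝ, max t 1 - max s 1 ≤ |t - s| :=
    fun s t => (le_abs_self _).trans (abs_max_sub_max_le_abs t s 1)
  rcases le_total t₁ t₂ with h | h
  · rw [abs_sub_comm, abs_of_nonneg (sub_nonneg.2 (hM.nuA_mono (le_max_right _ _)
      (max_le_max_right 1 h)))]
    have hc : 1 + (max t₂ 1 - max t₁ 1) ≤ 1 + |t₁ - t₂| := by
      linarith [hgap t₁ t₂, abs_sub_comm t₁ t₂]
    have hb := hbound_nonneg _ (le_max_right t₂ 1)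
    calc nuA M (max t₂ 1) - nuA M (max t₁ 1)
        ≤ A * (nuA M (max t₂ 1) + 1) / max t₂ 1 * (1 + (max t₂ 1 - max t₁ 1)) ^ 2 :=
          hM.nuA_sub_le_at_right (by linarith [hA _ (le_max_right t₂ 1)]) (le_max_right _ _)
            (max_le_max_right 1 h)
      _ ≤ A * (nuA M (max t₂ 1) + 1) / max t₂ 1 * (1 + |t₁ - t₂|) ^ (N + 2) := by
          refine mul_le_mul_of_nonneg_left ((pow_le_pow_left₀ ?_ hc 2).trans
            (pow_le_pow_right₀ (by linarith [abs_nonneg (t₁ - t₂)]) (by omega))) hb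
          linarith [max_le_max_right 1 h]
      _ ≤ 2 * N * A * (nuA M (max t₂ 1) + 1) / max t₂ 1 * (1 + |t₁ - t₂|) ^ (N + 2) := by
          rw [hscale]
          exact mul_le_mul_of_nonneg_right (le_mul_of_one_le_left hb hN2) (by positivity)
  · rw [abs_of_nonneg (sub_nonneg.2 (hM.nuA_mono (le_max_right _ _) (max_le_max_right 1 h)))]
    calc nuA M (max t₁ 1) - nuA M (max t₂ 1)
        ≤ 2 * N * A * (nuA M (max t₂ 1) + 1) / max t₂ 1 * (1 + (max t₁ 1 - max t₂ 1)) ^ (N + 2) :=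
          hM.nuA_sub_le_at_left hN hstar (hA _ (le_max_right _ _)) (le_max_right _ _)
            (max_le_max_right 1 h)
      _ ≤ 2 * N * A * (nuA M (max t₂ 1) + 1) / max t₂ 1 * (1 + |t₁ - t₂|) ^ (N + 2) := by
          rw [hscale]
          refine mul_le_mul_of_nonneg_left (pow_le_pow_left₀ ?_ ?_ _)
            (mul_nonneg (by positivity) (hbound_nonneg _ (le_max_right _ _)))
          · linarith [max_le_max_right 1 h]
          · linarith [hgap t₂ t₁]

end M2star

end IsWeightSeq

theorem eventually_mul_add_one_div_le {f : ℝ → ℝ} (hf : Tendsto f atTop atTop) {C ε : ℝ}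
    (hC : 0 ≤ C) (hε : 0 < ε) : ∀ᶠ t in atTop, C * (f t + 1) / t ≤ ε * f t := by
  filter_upwards [hf.eventually_ge_atTop 1, eventually_ge_atTop (2 * C / ε),
    eventually_gt_atTop 0] with t hf₁ ht ht₀
  rw [div_le_iff₀ ht₀]
  rw [div_le_iff₀ hε] at ht
  nlinarith [mul_nonneg hC (sub_nonneg.2 hf₁),
    mul_le_mul_of_nonneg_right ht (by linarith : 0 ≤ f t)]

/-- Regularization of the associated function for weight sequences satisfying (M.2)*
(Lemma 6.1). -/
theorem stmt3 (M : ℕ → ℝ) (hM : IsWeightSeq M) (h2s : M2star M) :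
    ∃ ν : ℝ → ℝ, ContinuousOn ν (Set.Ici 0) ∧ MonotoneOn ν (Set.Ici 0) ∧
      (∀ t : ℝ, 0 ≤ t → 0 ≤ ν t) ∧
      (∃ C : ℝ, 0 < C ∧ ∀ᶠ t in atTop, ν t ≤ C * nuA M t) ∧
      (∃ C : ℝ, 0 < C ∧ ∀ᶠ t in atTop, nuA M t ≤ C * ν t) ∧
      ∃ η : ℝ → ℝ, ContinuousOn η (Set.Ici 0) ∧ (∀ t : ℝ, 0 ≤ t → 0 ≤ η t) ∧
        (∀ ε : ℝ, 0 < ε → ∀ᶠ t in atTop, η t ≤ ε * ν t) ∧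
        ∃ N : ℕ, ∀ t₁ t₂ : ℝ, 0 ≤ t₁ → 0 ≤ t₂ →
          |ν t₁ - ν t₂| ≤ η t₂ * (1 + |t₁ - t₂|) ^ N := by
  obtain ⟨p₀, N, -, hN, hstar⟩ := h2s
  obtain ⟨A, hA₀, hA⟩ := hM.exists_counting_add_le hN hstar
  set ν : ℝ → ℝ := fun t => nuA M (max t 1)
  have hν_nonneg : ∀ t, 0 ≤ ν t := fun t => hM.nuA_nonneg (le_max_right t 1)
  have hν_eq : ∀ᶠ t in atTop, ν t = nuA M t := by
    filter_upwards [eventually_ge_atTop 1] with t ht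
    simp only [ν, max_eq_left ht]
  have hC : (0 : ℝ) ≤ 2 * N * A := by positivity
  refine ⟨ν, hM.continuous_nuA_max_one.continuousOn,
    fun s _ t _ hst => hM.nuA_mono (le_max_right _ _) (max_le_max_right 1 hst),
    fun t _ => hν_nonneg t, ⟨1, one_pos, hν_eq.mono fun t h => by rw [h, one_mul]⟩,
    ⟨1, one_pos, hν_eq.mono fun t h => by rw [h, one_mul]⟩,
    fun t => 2 * N * A * (ν t + 1) / max t 1, ?_,
    fun t _ => div_nonneg (mul_nonneg hC (by linarith [hν_nonneg t])) (by positivity),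
    fun ε hε => ?_, N + 2, fun t₁ t₂ _ _ => hM.abs_nuA_max_one_sub_le hN hstar hA t₁ t₂⟩
  · exact (continuous_const.mul (hM.continuous_nuA_max_one.add continuous_const)).div
      (continuous_id.max continuous_const) (fun t => by positivity) |>.continuousOn
  · have hν_tendsto : Tendsto ν atTop atTop :=
      hM.tendsto_nuA.congr' (hν_eq.mono fun _ h => h.symm)
    filter_upwards [eventually_mul_add_one_div_le hν_tendsto hC hε, eventually_ge_atTop 1]
      with t h ht
    rwa [max_eq_left ht]
end
end

section
/- Let M be a weight sequence satisfying (M.2) and (M.2)*. For every r ∈ 𝔕 there exists r' ∈ 𝔕 with r'_j ≤ r_j for all j such that the sequence N = (N_p)_{p∈ℕ} with N_p = M_p / ∏_{j=0}^p r'_j is again a weight sequence satisfying (M.2) and (M.2)*. -/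
/-!
Put `m_p = M_p / M_{p-1}` and let `K = (max N 2)²` for the factor `N` of (M.2)*, so that
`4 m_p ≤ m_{Kp}` eventually. Define `r'` recursively as the minimum of `r_p`, `√m_p`,
`r'_{p-1} m_p / m_{p-1}` and `2 r'_{⌊p/K⌋}`, and `N_p = M_p / ∏_{j ≤ p} r'_j`. The second term gives
`∏_{j ≤ p} r'_j ≤ √M_p`, hence `N_p ≥ √M_p` and `N_p^{1/p} → ∞`; the third makes the quotients
`m_p / r'_p` of `N` non-decreasing, i.e. `N` log-convex; the fourth gives `r'_{Kp} ≤ 2 r'_p`, which with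
`4 m_p ≤ m_{Kp}` is (M.2)* for `N`. (M.2) passes to `N` because the partial products of a
non-decreasing sequence starting at `1` are supermultiplicative.
-/

open Filter MeasureTheory
open scoped BigOperators

noncomputable section

/-- `quotSeq M 0 = M 0 / M 0`, by truncated subtraction. -/
def quotSeq (M : ℕ → ℝ) (p : ℕ) : ℝ := M p / M (p - 1)

section QuotSeq

variable {M : ℕ → ℝ}

lemma quotSeq_pos (hM : ∀ p, 0 < M p) (p : ℕ) : 0 < quotSeq M p :=
  div_pos (hM p) (hM _)

lemma quotSeq_zero (hM : M 0 ≠ 0) : quotSeq M 0 = 1 :=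
  div_self hM

lemma sq_le_mul_iff_quotSeq_le (hM : ∀ p, 0 < M p) (p : ℕ) :
    M p ^ 2 ≤ M (p - 1) * M (p + 1) ↔ quotSeq M p ≤ quotSeq M (p + 1) := by
  rw [quotSeq, quotSeq, Nat.add_sub_cancel, div_le_div_iff₀ (hM _) (hM _), sq,
    mul_comm (M (p + 1))]

lemma monotone_quotSeq (hM : IsWeightSeq M) : Monotone (quotSeq M) := by
  obtain ⟨hpos, hM0, hM1, -, hlc⟩ := hM
  refine monotone_nat_of_le_succ fun p => ?_
  rcases Nat.eq_zero_or_pos p with rfl | hp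
  · simp [quotSeq, hM0, hM1]
  · exact (sq_le_mul_iff_quotSeq_le hpos p).1 (hlc p hp)

lemma prod_quotSeq (hM : ∀ p, 0 < M p) (hM0 : M 0 = 1) (p : ℕ) :
    ∏ j ∈ Finset.range (p + 1), quotSeq M j = M p := by
  induction p with
  | zero => simp [quotSeq_zero (hM 0).ne', hM0]
  | succ n ih =>
    rw [Finset.prod_range_succ, ih, quotSeq, Nat.add_sub_cancel, mul_div_cancel₀ _ (hM n).ne']

lemma tendsto_quotSeq_atTop (hM : IsWeightSeq M) : Tendsto (quotSeq M) atTop atTop := by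
  have hmono := monotone_quotSeq hM
  obtain ⟨hpos, hM0, -, htend, -⟩ := hM
  refine tendsto_atTop_mono' atTop ?_ htend
  filter_upwards [eventually_ge_atTop 1] with p hp
  have hMp : M p ≤ quotSeq M p ^ p := by
    rw [← prod_quotSeq hpos hM0, Finset.prod_range_succ', quotSeq_zero (hpos 0).ne', mul_one]
    calc ∏ j ∈ Finset.range p, quotSeq M (j + 1)
        ≤ ∏ _j ∈ Finset.range p, quotSeq M p :=
          Finset.prod_le_prod (fun j _ => (quotSeq_pos hpos _).le)
            fun j hj => hmono (Finset.mem_range.1 hj)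
      _ = quotSeq M p ^ p := by rw [Finset.prod_const, Finset.card_range]
  calc M p ^ (p : ℝ)⁻¹ ≤ (quotSeq M p ^ p) ^ (p : ℝ)⁻¹ := by gcongr; exact (hpos p).le
    _ = quotSeq M p := Real.pow_rpow_inv_natCast (quotSeq_pos hpos p).le (by omega)

lemma exists_four_mul_quotSeq_le (hM : IsWeightSeq M) (h : M2star M) :
    ∃ p₀ K : ℕ, 0 < p₀ ∧ 2 ≤ K ∧ ∀ p, p₀ ≤ p → 4 * quotSeq M p ≤ quotSeq M (K * p) := by
  obtain ⟨p₀, N, hp₀, -, hN⟩ := h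
  have hmono := monotone_quotSeq hM
  have hdouble : ∀ p, p₀ ≤ p → 2 * quotSeq M p ≤ quotSeq M (max N 2 * p) := fun p hp =>
    (hN p hp).trans (hmono (Nat.mul_le_mul_right p (le_max_left N 2)))
  refine ⟨p₀, max N 2 * max N 2, hp₀, by nlinarith [le_max_right N 2], fun p hp => ?_⟩
  have hp' : p₀ ≤ max N 2 * p := hp.trans (Nat.le_mul_of_pos_left p (by omega))
  have := hdouble _ hp'
  rw [← mul_assoc] at this
  linarith [hdouble p hp]

end QuotSeq

/-- The `max K 2` only makes the recursion well-founded. -/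
def reducedSeq (m r : ℕ → ℝ) (K : ℕ) : ℕ → ℝ
  | 0 => 1
  | 1 => 1
  | p + 2 =>
    min (min (r (p + 2)) √(m (p + 2)))
      (min (reducedSeq m r K (p + 1) * (m (p + 2) / m (p + 1)))
        (2 * reducedSeq m r K ((p + 2) / max K 2)))
  decreasing_by
  · omega
  · exact Nat.div_lt_self (by omega) (by omega)

section ReducedSeq

variable {m r : ℕ → ℝ} {K : ℕ}

@[simp] lemma reducedSeq_zero : reducedSeq m r K 0 = 1 := by rw [reducedSeq]

@[simp] lemma reducedSeq_one : reducedSeq m r K 1 = 1 := by rw [reducedSeq]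

lemma reducedSeq_add_two (hK : 2 ≤ K) (p : ℕ) :
    reducedSeq m r K (p + 2) =
      min (min (r (p + 2)) √(m (p + 2)))
        (min (reducedSeq m r K (p + 1) * (m (p + 2) / m (p + 1)))
          (2 * reducedSeq m r K ((p + 2) / K))) := by
  rw [reducedSeq, max_eq_left hK]

lemma reducedSeq_le (hK : 2 ≤ K) (hr0 : 1 ≤ r 0) (hr1 : 1 ≤ r 1) (p : ℕ) :
    reducedSeq m r K p ≤ r p := by
  match p with
  | 0 => simpa using hr0
  | 1 => simpa using hr1
  | p + 2 => rw [reducedSeq_add_two hK]; exact (min_le_left _ _).trans (min_le_left _ _)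

lemma reducedSeq_le_sqrt (hK : 2 ≤ K) (hm0 : 1 ≤ m 0) (hm1 : 1 ≤ m 1) (p : ℕ) :
    reducedSeq m r K p ≤ √(m p) := by
  match p with
  | 0 => simpa using hm0
  | 1 => simpa using hm1
  | p + 2 => rw [reducedSeq_add_two hK]; exact (min_le_left _ _).trans (min_le_right _ _)

lemma reducedSeq_add_two_le (hK : 2 ≤ K) (p : ℕ) :
    reducedSeq m r K (p + 2) ≤ reducedSeq m r K (p + 1) * (m (p + 2) / m (p + 1)) := by
  rw [reducedSeq_add_two hK]; exact (min_le_right _ _).trans (min_le_left _ _)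

lemma reducedSeq_le_two_mul_div (hK : 2 ≤ K) (p : ℕ) :
    reducedSeq m r K p ≤ 2 * reducedSeq m r K (p / K) := by
  match p with
  | 0 => norm_num
  | 1 => rw [Nat.div_eq_of_lt (by omega)]; norm_num
  | p + 2 => rw [reducedSeq_add_two hK]; exact (min_le_right _ _).trans (min_le_right _ _)

lemma reducedSeq_add_two_eq_of_lt (hK : 2 ≤ K) {p : ℕ}
    (hr : reducedSeq m r K (p + 2) < r (p + 2)) (hm : reducedSeq m r K (p + 2) < √(m (p + 2)))
    (hcap : reducedSeq m r K (p + 2) < 2 * reducedSeq m r K ((p + 2) / K)) :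
    reducedSeq m r K (p + 2) = reducedSeq m r K (p + 1) * (m (p + 2) / m (p + 1)) := by
  refine le_antisymm (reducedSeq_add_two_le hK p) (not_lt.1 fun h => ?_)
  have := lt_min (lt_min hr hm) (lt_min h hcap)
  rw [← reducedSeq_add_two hK] at this
  exact this.false

lemma monotone_reducedSeq (hK : 2 ≤ K) (hm : Monotone m) (hm0 : 1 ≤ m 0) (hr : Monotone r)
    (hr0 : 1 ≤ r 0) : Monotone (reducedSeq m r K) := by
  have hm1 : 1 ≤ m 1 := hm0.trans (hm zero_le_one)
  have hmpos : ∀ p, 0 < m p := fun p => one_pos.trans_le (hm0.trans (hm p.zero_le))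
  suffices key : ∀ p, ∀ i ≤ p, reducedSeq m r K i ≤ reducedSeq m r K p from
    fun i p hip => key p i hip
  intro p
  induction p using Nat.strong_induction_on with
  | _ p ih =>
  intro i hi
  rcases hi.eq_or_lt with rfl | hi
  · rfl
  obtain ⟨q, rfl⟩ : ∃ q, p = q + 1 := ⟨p - 1, by omega⟩
  refine (ih q (by omega) i (by omega)).trans ?_
  rcases q with _ | q
  · simp
  have hone : 1 ≤ reducedSeq m r K (q + 1) := by simpa using ih (q + 1) (by omega) 0 (by omega)
  rw [reducedSeq_add_two hK]
  refine le_min (le_min ?_ ?_) (le_min ?_ ?_)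
  · exact (reducedSeq_le hK hr0 (hr0.trans (hr zero_le_one)) _).trans (hr (by omega))
  · exact (reducedSeq_le_sqrt hK hm0 hm1 _).trans (Real.sqrt_le_sqrt (hm (by omega)))
  · exact le_mul_of_one_le_right (by linarith) ((one_le_div (hmpos _)).2 (hm (by omega)))
  · calc reducedSeq m r K (q + 1) ≤ 2 * reducedSeq m r K ((q + 1) / K) :=
          reducedSeq_le_two_mul_div hK _
      _ ≤ 2 * reducedSeq m r K ((q + 2) / K) := by
        gcongr
        exact ih _ (Nat.div_lt_self (by omega) (by omega)) _ (Nat.div_le_div_right (by omega))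

lemma one_le_reducedSeq (hK : 2 ≤ K) (hm : Monotone m) (hm0 : 1 ≤ m 0) (hr : Monotone r)
    (hr0 : 1 ≤ r 0) (p : ℕ) : 1 ≤ reducedSeq m r K p := by
  simpa using monotone_reducedSeq hK hm hm0 hr hr0 p.zero_le

/-- If `r'` stayed bounded, eventually only the ratio branch of its recursion would be active,
so `r' / m` would be eventually constant and `r'` would grow like `m`. -/
lemma tendsto_reducedSeq_atTop (hK : 2 ≤ K) (hm : Monotone m) (hm0 : 1 ≤ m 0)
    (hm_tend : Tendsto m atTop atTop) (hr : Monotone r) (hr0 : 1 ≤ r 0)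
    (hr_tend : Tendsto r atTop atTop) : Tendsto (reducedSeq m r K) atTop atTop := by
  set s := reducedSeq m r K
  have hs := monotone_reducedSeq hK hm hm0 hr hr0
  have hmpos : ∀ p, 0 < m p := fun p => one_pos.trans_le (hm0.trans (hm p.zero_le))
  refine tendsto_atTop_atTop_of_monotone' hs fun hbdd => ?_
  set L := ⨆ p, s p
  have hlim : Tendsto s atTop (nhds L) := tendsto_atTop_ciSup hs hbdd
  have hsL : ∀ p, s p ≤ L := le_ciSup hbdd
  have hL : 0 < L := one_pos.trans_le ((one_le_reducedSeq hK hm hm0 hr hr0 0).trans (hsL 0))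
  have hshift : Tendsto (· + 2) atTop atTop := tendsto_add_atTop_nat 2
  have hratio : ∀ᶠ p in atTop, s (p + 2) = s (p + 1) * (m (p + 2) / m (p + 1)) := by
    filter_upwards [(hr_tend.comp hshift).eventually_gt_atTop L,
      ((Real.tendsto_sqrt_atTop.comp hm_tend).comp hshift).eventually_gt_atTop L,
      ((hlim.comp ((Nat.tendsto_div_const_atTop (n := K) (by omega)).comp hshift)).eventually
        (lt_mem_nhds (half_lt_self hL)))] with p hrp hmp hcap
    refine reducedSeq_add_two_eq_of_lt hK ?_ ?_ ?_
    · exact (hsL _).trans_lt hrp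
    · exact (hsL _).trans_lt hmp
    · exact (hsL _).trans_lt (by simp only [Function.comp_apply] at hcap; linarith)
  obtain ⟨P, hP⟩ := eventually_atTop.1 hratio
  have hprop : ∀ p, P + 1 ≤ p → s p = s (P + 1) / m (P + 1) * m p := by
    refine Nat.le_induction (by field_simp [(hmpos _).ne']) fun p hp ih => ?_
    obtain ⟨q, rfl⟩ : ∃ q, p = q + 1 := ⟨p - 1, by omega⟩
    rw [hP q (by omega), ih]
    field_simp [(hmpos (q + 1)).ne']
  have hs_tend : Tendsto s atTop atTop :=
    (hm_tend.const_mul_atTop (div_pos (one_pos.trans_le (one_le_reducedSeq hK hm hm0 hr hr0 _))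
      (hmpos _))).congr' (eventually_atTop.2 ⟨P + 1, fun p hp => (hprop p hp).symm⟩)
  exact not_tendsto_nhds_of_tendsto_atTop hs_tend L hlim

lemma div_reducedSeq_le_succ (hK : 2 ≤ K) (hm : Monotone m) (hm0 : 1 ≤ m 0) (hr : Monotone r)
    (hr0 : 1 ≤ r 0) {p : ℕ} (hp : 1 ≤ p) :
    m p / reducedSeq m r K p ≤ m (p + 1) / reducedSeq m r K (p + 1) := by
  obtain ⟨q, rfl⟩ : ∃ q, p = q + 1 := ⟨p - 1, by omega⟩
  have hmpos : ∀ p, 0 < m p := fun p => one_pos.trans_le (hm0.trans (hm p.zero_le))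
  have hspos : ∀ p, 0 < reducedSeq m r K p :=
    fun p => one_pos.trans_le (one_le_reducedSeq hK hm hm0 hr hr0 p)
  rw [div_le_div_iff₀ (hspos _) (hspos _)]
  have := reducedSeq_add_two_le (m := m) (r := r) hK q
  rw [mul_div_assoc', le_div_iff₀ (hmpos _)] at this
  linarith

lemma inFrakR_reducedSeq (hK : 2 ≤ K) (hm : Monotone m) (hm0 : 1 ≤ m 0)
    (hm_tend : Tendsto m atTop atTop) (hr : inFrakR r) : inFrakR (reducedSeq m r K) := by
  obtain ⟨-, hr_mono, hr0, -, hr_tend⟩ := hr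
  exact ⟨fun p => one_pos.trans_le (one_le_reducedSeq hK hm hm0 hr_mono hr0.ge p),
    monotone_reducedSeq hK hm hm0 hr_mono hr0.ge, reducedSeq_zero, reducedSeq_one,
    tendsto_reducedSeq_atTop hK hm hm0 hm_tend hr_mono hr0.ge hr_tend⟩

lemma reducedSeq_mul_le (hK : 2 ≤ K) (p : ℕ) :
    reducedSeq m r K (K * p) ≤ 2 * reducedSeq m r K p := by
  simpa [Nat.mul_div_cancel_left p (by omega : 0 < K)] using
    reducedSeq_le_two_mul_div (m := m) (r := r) hK (K * p)

end ReducedSeq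

def divProd (M s : ℕ → ℝ) (p : ℕ) : ℝ := M p / ∏ j ∈ Finset.range (p + 1), s j

section DivProd

variable {M s : ℕ → ℝ}

lemma quotSeq_divProd (hM : ∀ p, 0 < M p) (hs : ∀ p, 0 < s p) {p : ℕ} (hp : p ≠ 0) :
    quotSeq (divProd M s) p = quotSeq M p / s p := by
  obtain ⟨q, rfl⟩ : ∃ q, p = q + 1 := ⟨p - 1, by omega⟩
  have hprod := Finset.prod_pos fun j (_ : j ∈ Finset.range (q + 1)) => hs j
  simp only [quotSeq, divProd, Nat.add_sub_cancel, Finset.prod_range_succ _ (q + 1)]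
  field_simp [(hM q).ne', (hM (q + 1)).ne', (hs (q + 1)).ne', hprod.ne']

lemma prod_le_sqrt (hM : ∀ p, 0 < M p) (hM0 : M 0 = 1) (hs : ∀ p, 0 ≤ s p)
    (hsm : ∀ p, s p ≤ √(quotSeq M p)) (p : ℕ) :
    ∏ j ∈ Finset.range (p + 1), s j ≤ √(M p) :=
  calc ∏ j ∈ Finset.range (p + 1), s j ≤ ∏ j ∈ Finset.range (p + 1), √(quotSeq M j) :=
        Finset.prod_le_prod (fun j _ => hs j) fun j _ => hsm j
    _ = √(M p) := by
      rw [← Real.sqrt_prod _ fun j _ => (quotSeq_pos hM j).le, prod_quotSeq hM hM0]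

lemma sqrt_le_divProd (hM : ∀ p, 0 < M p) (hM0 : M 0 = 1) (hs : ∀ p, 0 < s p)
    (hsm : ∀ p, s p ≤ √(quotSeq M p)) (p : ℕ) : √(M p) ≤ divProd M s p :=
  calc √(M p) = M p / √(M p) := Real.div_sqrt.symm
    _ ≤ divProd M s p := div_le_div_of_nonneg_left (hM p).le
        (Finset.prod_pos fun j _ => hs j) (prod_le_sqrt hM hM0 (fun j => (hs j).le) hsm p)

lemma tendsto_rpow_inv_of_sqrt_le {N : ℕ → ℝ} (hM : ∀ p, 0 ≤ M p)
    (hM_tend : Tendsto (fun p : ℕ => M p ^ (p : ℝ)⁻¹) atTop atTop) (hMN : ∀ p, √(M p) ≤ N p) :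
    Tendsto (fun p : ℕ => N p ^ (p : ℝ)⁻¹) atTop atTop := by
  refine tendsto_atTop_mono (fun p => ?_) (Real.tendsto_sqrt_atTop.comp hM_tend)
  calc √(M p ^ (p : ℝ)⁻¹) = √(M p) ^ (p : ℝ)⁻¹ := by
        rw [Real.sqrt_eq_rpow, Real.sqrt_eq_rpow, ← Real.rpow_mul (hM p),
          ← Real.rpow_mul (hM p), mul_comm]
    _ ≤ N p ^ (p : ℝ)⁻¹ := Real.rpow_le_rpow (Real.sqrt_nonneg _) (hMN p) (by positivity)

lemma isWeightSeq_divProd (hM : IsWeightSeq M) (hs : ∀ p, 0 < s p) (hs0 : s 0 = 1)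
    (hs1 : s 1 = 1) (hsm : ∀ p, s p ≤ √(quotSeq M p))
    (hquot : ∀ p, 1 ≤ p → quotSeq M p / s p ≤ quotSeq M (p + 1) / s (p + 1)) :
    IsWeightSeq (divProd M s) := by
  obtain ⟨hMpos, hM0, hM1, hM_tend, -⟩ := hM
  have hNpos : ∀ p, 0 < divProd M s p :=
    fun p => div_pos (hMpos p) (Finset.prod_pos fun j _ => hs j)
  refine ⟨hNpos, by simp [divProd, hM0, hs0],
    by simp [divProd, Finset.prod_range_succ, hM1, hs0, hs1],
    tendsto_rpow_inv_of_sqrt_le (fun p => (hMpos p).le) hM_tend (sqrt_le_divProd hMpos hM0 hs hsm),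
    fun p hp => ?_⟩
  rw [sq_le_mul_iff_quotSeq_le hNpos, quotSeq_divProd hMpos hs (by omega),
    quotSeq_divProd hMpos hs (by omega)]
  exact hquot p hp

lemma prod_mul_prod_le_prod (hs0 : s 0 = 1) (hs : Monotone s) (p q : ℕ) :
    (∏ j ∈ Finset.range (p + 1), s j) * ∏ j ∈ Finset.range (q + 1), s j ≤
      ∏ j ∈ Finset.range (p + q + 1), s j := by
  have hone : ∀ j, 1 ≤ s j := fun j => hs0 ▸ hs j.zero_le
  rw [show p + q + 1 = p + 1 + q by omega, Finset.prod_range_add s (p + 1) q,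
    Finset.prod_range_succ' _ q, hs0, mul_one]
  refine mul_le_mul_of_nonneg_left ?_ (Finset.prod_nonneg fun j _ => zero_le_one.trans (hone j))
  exact Finset.prod_le_prod (fun j _ => zero_le_one.trans (hone _)) fun j _ => hs (by omega)

lemma hasM2_divProd (hM : ∀ p, 0 < M p) (hs0 : s 0 = 1) (hs : Monotone s) {C₀ H : ℝ}
    (h : HasM2 M C₀ H) : HasM2 (divProd M s) C₀ H := by
  obtain ⟨hC₀, hH, hM2⟩ := h
  refine ⟨hC₀, hH, fun p q => ?_⟩
  have hprod : ∀ n, 0 < ∏ j ∈ Finset.range (n + 1), s j :=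
    fun n => Finset.prod_pos fun j _ => one_pos.trans_le (hs0 ▸ hs j.zero_le)
  calc divProd M s (p + q)
      ≤ M (p + q) / ((∏ j ∈ Finset.range (p + 1), s j) * ∏ j ∈ Finset.range (q + 1), s j) :=
        div_le_div_of_nonneg_left (hM _).le (mul_pos (hprod p) (hprod q))
          (prod_mul_prod_le_prod hs0 hs p q)
    _ ≤ C₀ * H ^ (p + q) * M p * M q /
          ((∏ j ∈ Finset.range (p + 1), s j) * ∏ j ∈ Finset.range (q + 1), s j) :=
        div_le_div_of_nonneg_right (hM2 p q) (mul_pos (hprod p) (hprod q)).le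
    _ = C₀ * H ^ (p + q) * divProd M s p * divProd M s q := by
        simp only [divProd]; ring

lemma m2star_divProd (hM : ∀ p, 0 < M p) (hs : ∀ p, 0 < s p) {p₀ K : ℕ} (hp₀ : 0 < p₀)
    (hK : 0 < K) (hm : ∀ p, p₀ ≤ p → 4 * quotSeq M p ≤ quotSeq M (K * p))
    (hsK : ∀ p, s (K * p) ≤ 2 * s p) : M2star (divProd M s) := by
  refine ⟨p₀, K, hp₀, hK, fun p hp => ?_⟩
  change 2 * quotSeq (divProd M s) p ≤ quotSeq (divProd M s) (K * p)
  have hKp : K * p ≠ 0 := (Nat.mul_pos hK (by omega)).ne'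
  rw [quotSeq_divProd hM hs (by omega), quotSeq_divProd hM hs hKp, mul_div_assoc',
    div_le_div_iff₀ (hs _) (hs _)]
  calc 2 * quotSeq M p * s (K * p) ≤ 2 * quotSeq M p * (2 * s p) := by
        have := quotSeq_pos hM p
        gcongr
        exact hsK p
    _ = 4 * quotSeq M p * s p := by ring
    _ ≤ quotSeq M (K * p) * s p := by gcongr; exacts [(hs p).le, hm p hp]

end DivProd

/-- Reduction lemma: dividing a weight sequence satisfying (M.2) and (M.2)* by a suitable
product of a sequence of 𝔖 yields again such a weight sequence (Lemma 6.5). -/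
theorem stmt6 (M : ℕ → ℝ) (hM : IsWeightSeq M) (hM2 : M2 M) (h2s : M2star M)
    (r : ℕ → ℝ) (hr : inFrakR r) :
    ∃ r' : ℕ → ℝ, inFrakR r' ∧ (∀ j, r' j ≤ r j) ∧
      IsWeightSeq (fun p => M p / ∏ j ∈ Finset.range (p+1), r' j) ∧
      M2 (fun p => M p / ∏ j ∈ Finset.range (p+1), r' j) ∧
      M2star (fun p => M p / ∏ j ∈ Finset.range (p+1), r' j) := by
  obtain ⟨p₀, K, hp₀, hK, hmK⟩ := exists_four_mul_quotSeq_le hM h2s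
  obtain ⟨C₀, H, hCH⟩ := hM2
  have hm := monotone_quotSeq hM
  have hm0 : 1 ≤ quotSeq M 0 := (quotSeq_zero (hM.1 0).ne').ge
  have hr' := inFrakR_reducedSeq hK hm hm0 (tendsto_quotSeq_atTop hM) hr
  have ⟨hr'_pos, hr'_mono, hr'0, hr'1, _⟩ := hr'
  obtain ⟨-, hr_mono, hr0, hr1, -⟩ := hr
  refine ⟨reducedSeq (quotSeq M) r K, hr', reducedSeq_le hK hr0.ge hr1.ge, ?_,
    ⟨C₀, H, hasM2_divProd hM.1 hr'0 hr'_mono hCH⟩,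
    m2star_divProd hM.1 hr'_pos hp₀ (by omega) hmK (reducedSeq_mul_le hK)⟩
  exact isWeightSeq_divProd hM hr'_pos hr'0 hr'1
    (reducedSeq_le_sqrt hK hm0 (hm0.trans (hm zero_le_one)))
    fun p hp => div_reducedSeq_le_succ hK hm hm0 hr_mono hr0.ge hp
end
end
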